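/- Let R be a Prüfer domain, let ⋆ be a stable (semi)star operation on R, and let P be a prime ideal of R. If P belongs to QSpec^⋆(R) ∪ PsSpec^⋆(R), then the localization R_P, viewed as an R-submodule of the quotient field K, is ⋆-closed, i.e., (R_P)^⋆ = R_P. -/

import Mathlib

open Pointwise

section Defs

variable {R : Type*} (K : Type*) [CommRing R] [IsDomain R] [Field K] [Algebra R K]
  [IsFractionRing R K]

/-- A function `f` on the `R`-submodules of the quotient field `K` is a semistar operation if it
is extensive, idempotent, monotone and commutes with scaling by elements of `K`. -/
def IsSemistarOperation (f : Submodule R K → Submodule R K) : Prop :=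
  (∀ I : Submodule R K, I ≤ f I) ∧
  (∀ I : Submodule R K, f (f I) = f I) ∧
  (∀ I J : Submodule R K, I ≤ J → f I ≤ f J) ∧
  (∀ (x : K) (I : Submodule R K), f (x • I) = x • f I)

/-- A semistar operation is stable if it distributes over finite intersections. -/
def IsStableOperation (f : Submodule R K → Submodule R K) : Prop :=
  ∀ I J : Submodule R K, f (I ⊓ J) = f I ⊓ f J

/-- An ideal of `R`, viewed as an `R`-submodule of the quotient field `K`. -/
def idealToK (I : Ideal R) : Submodule R K :=
  Submodule.map (Algebra.linearMap R K) I

/-- A Prüfer domain is an integral domain in which every nonzero finitely generated ideal is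
invertible (as a fractional ideal, i.e. as a submodule of the quotient field). -/
def IsPruferDomain : Prop :=
  ∀ I : Ideal R, I ≠ ⊥ → I.FG → ∃ J : Submodule R K, idealToK K I * J = 1

/-- The localization `R_P` of `R` at the prime `P`, viewed as an `R`-submodule of the quotient
field `K`. -/
noncomputable def locSub (P : Ideal R) (hP : P.IsPrime) : Submodule R K :=
  haveI := hP
  Subalgebra.toSubmodule
    (Localization.subalgebra K P.primeCompl
      (fun x hx => mem_nonZeroDivisors_of_ne_zero (fun h0 => hx (h0 ▸ P.zero_mem))))

/-- The `v`-operation of the valuation ring `R_P`, applied to the `R_P`-submodule of `K`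
generated by (the image of) `I`: it sends `I` to `(R_P : (R_P : IR_P))`. -/
noncomputable def vOp (P : Ideal R) (hP : P.IsPrime) (I : Submodule R K) : Submodule R K :=
  locSub K P hP / (locSub K P hP / (I * locSub K P hP))

/-- The quasi-spectrum of a (stable) semistar operation: the set of primes `P` such that
`P^⋆ ∩ R = P`. -/
def QSpec (f : Submodule R K → Submodule R K) : Set (Ideal R) :=
  {P | P.IsPrime ∧ f (idealToK K P) ⊓ 1 = idealToK K P}

/-- The pseudo-spectrum of a stable semistar operation: the set of primes `P` such that
`P^⋆ ∩ R = R` and `L^⋆ ∩ R = L` for some `P`-primary ideal `L`. -/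
def PsSpec (f : Submodule R K → Submodule R K) : Set (Ideal R) :=
  {P | P.IsPrime ∧ f (idealToK K P) ⊓ 1 = 1 ∧
    ∃ L : Ideal R, L.IsPrimary ∧ L.radical = P ∧ f (idealToK K L) ⊓ 1 = idealToK K L}

/-- The normalized stable version of a stable semistar operation `f`:
`I ↦ ⋂ {IR_P : P ∈ QSpec} ∩ ⋂ {(IR_P)^{v_{R_P}} : P ∈ PsSpec}`. -/
noncomputable def normStable (f : Submodule R K → Submodule R K) (I : Submodule R K) :
    Submodule R K :=
  (⨅ P : QSpec K f, I * locSub K P.1 P.2.1) ⊓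
    ⨅ P : PsSpec K f, vOp K P.1 P.2.1 I

end Defs


section Aux

variable {R : Type*} (K : Type*) [CommRing R] [IsDomain R] [Field K] [Algebra R K]
  [IsFractionRing R K]

lemma mem_locSub_iff (P : Ideal R) (hP : P.IsPrime) (x : K) :
    x ∈ locSub K P hP ↔
      ∃ a s : R, s ∉ P ∧ x * algebraMap R K s = algebraMap R K a := by
  constructor
  · intro hx
    rw [locSub, Subalgebra.mem_toSubmodule] at hx
    obtain ⟨a, s, hs, rfl⟩ := hx
    exact ⟨a, s, hs, IsLocalization.mk'_spec K a _⟩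
  · rintro ⟨a, s, hs, h⟩
    rw [locSub, Subalgebra.mem_toSubmodule]
    exact ⟨a, s, hs, (IsLocalization.eq_mk'_iff_mul_eq).mpr h⟩

lemma mem_idealToK' {L : Ideal R} {z : K} :
    z ∈ idealToK K L ↔ ∃ r ∈ L, algebraMap R K r = z := by
  simp [idealToK, Submodule.mem_map, Algebra.linearMap_apply]

lemma one_le_locSub (P : Ideal R) (hP : P.IsPrime) : (1 : Submodule R K) ≤ locSub K P hP := by
  intro z hz
  obtain ⟨r, rfl⟩ := Submodule.mem_one.mp hz
  refine (mem_locSub_iff K P hP _).mpr ⟨r, 1, fun h => hP.ne_top (Ideal.eq_top_of_isUnit_mem _ h isUnit_one), ?_⟩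
  rw [map_one, mul_one]

lemma locSub_mul_self (P : Ideal R) (hP : P.IsPrime) :
    locSub K P hP * locSub K P hP = locSub K P hP := by
  rw [locSub]
  exact Subalgebra.isIdempotentElem_toSubmodule _

lemma mem_mul_locSub {L P : Ideal R} {hP : P.IsPrime} {x : K}
    (hx : x ∈ idealToK K L * locSub K P hP) :
    ∃ a s : R, a ∈ L ∧ s ∉ P ∧ x * algebraMap R K s = algebraMap R K a := by
  refine Submodule.mul_induction_on hx ?_ ?_
  · rintro m hm u hu
    obtain ⟨l, hl, rfl⟩ := (mem_idealToK' (K := K)).mp hm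
    obtain ⟨a, s, hs, h⟩ := (mem_locSub_iff K P hP u).mp hu
    refine ⟨l * a, s, L.mul_mem_right a hl, hs, ?_⟩
    rw [map_mul, mul_assoc, h]
  · rintro z w ⟨a, s, haL, hs, hzs⟩ ⟨b, t, hbL, ht, hwt⟩
    refine ⟨a * t + b * s, s * t, Ideal.add_mem _ (L.mul_mem_right t haL) (L.mul_mem_right s hbL),
      fun h => (hP.mem_or_mem h).elim hs ht, ?_⟩
    have : (z + w) * algebraMap R K (s * t)
        = (z * algebraMap R K s) * algebraMap R K t + (w * algebraMap R K t) * algebraMap R K s := by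
      rw [map_mul]; ring
    rw [this, hzs, hwt, map_add, map_mul, map_mul]

lemma mem_mul_locSub_of {L P : Ideal R} {hP : P.IsPrime} {x : K} {a s : R}
    (ha : a ∈ L) (hs : s ∉ P) (h : x * algebraMap R K s = algebraMap R K a) :
    x ∈ idealToK K L * locSub K P hP := by
  have hs0 : algebraMap R K s ≠ 0 := fun h0 =>
    hs (((IsFractionRing.to_map_eq_zero_iff (K := K)).mp h0) ▸ P.zero_mem)
  have hinv : (algebraMap R K s)⁻¹ ∈ locSub K P hP :=
    (mem_locSub_iff K P hP _).mpr ⟨1, s, hs, by rw [inv_mul_cancel₀ hs0, map_one]⟩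
  have hx : x = algebraMap R K a * (algebraMap R K s)⁻¹ := by
    field_simp [← h]
    exact h
  rw [hx]
  exact Submodule.mul_mem_mul ((mem_idealToK' (K := K)).mpr ⟨a, ha, rfl⟩) hinv

lemma inv_mem_of_not_mem (hR : IsPruferDomain (R := R) K) (P : Ideal R) (hP : P.IsPrime)
    {x : K} (hx : x ∉ locSub K P hP) :
    x⁻¹ ∈ idealToK K P * locSub K P hP := by
  have hx0 : x ≠ 0 := fun h => hx (h ▸ zero_mem _)
  obtain ⟨a, b, hb, hab⟩ := IsFractionRing.div_surjective (A := R) x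
  have hb0 : algebraMap R K b ≠ 0 :=
    IsFractionRing.to_map_ne_zero_of_mem_nonZeroDivisors hb
  have ha0 : a ≠ 0 := by
    intro h
    apply hx0
    rw [← hab, h, map_zero, zero_div]
  have hA0 : algebraMap R K a ≠ 0 := fun h0 =>
    ha0 ((IsFractionRing.to_map_eq_zero_iff (K := K)).mp h0)
  have hxb : x * algebraMap R K b = algebraMap R K a := by
    rw [← hab, div_mul_cancel₀ _ hb0]
  obtain ⟨J, hJ⟩ := hR (Ideal.span {a, b})
    (fun h0 => ha0 ((Submodule.mem_bot R).mp
      (h0 ▸ Ideal.subset_span (Set.mem_insert a {b}))))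
    (Submodule.fg_span (Set.toFinite _))
  have haI : a ∈ Ideal.span {a, b} := Ideal.subset_span (Set.mem_insert a {b})
  have hbI : b ∈ Ideal.span {a, b} := Ideal.subset_span (Set.mem_insert_of_mem a rfl)
  have h1 : (1 : K) ∈ idealToK K (Ideal.span {a, b}) * J := by
    rw [hJ]; exact Submodule.mem_one.mpr ⟨1, map_one _⟩
  have key : ∀ z ∈ idealToK K (Ideal.span {a, b}) * J,
      ∃ u v : K, z = algebraMap R K a * u + algebraMap R K b * v ∧
        algebraMap R K a * u ∈ (1 : Submodule R K) ∧ algebraMap R K a * v ∈ (1 : Submodule R K) ∧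
        algebraMap R K b * u ∈ (1 : Submodule R K) ∧ algebraMap R K b * v ∈ (1 : Submodule R K) := by
    intro z hz
    refine Submodule.mul_induction_on hz ?_ ?_
    · rintro m hm d hd
      obtain ⟨r, hr, rfl⟩ := (mem_idealToK' (K := K)).mp hm
      obtain ⟨c₁, c₂, hc⟩ := Submodule.mem_span_pair.mp hr
      have mem1 : ∀ c : R, ∀ w : R, w ∈ Ideal.span {a, b} →
          algebraMap R K w * (algebraMap R K c * d) ∈ (1 : Submodule R K) := by
        intro c w hw
        have : algebraMap R K w * d ∈ (1 : Submodule R K) := by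
          rw [← hJ]
          exact Submodule.mul_mem_mul ((mem_idealToK' (K := K)).mpr ⟨w, hw, rfl⟩) hd
        have h2 := Submodule.smul_mem (1 : Submodule R K) c this
        rwa [Algebra.smul_def, ← mul_assoc, mul_comm (algebraMap R K c), mul_assoc] at h2
      refine ⟨algebraMap R K c₁ * d, algebraMap R K c₂ * d, ?_,
        mem1 c₁ a haI, mem1 c₂ a haI, mem1 c₁ b hbI, mem1 c₂ b hbI⟩
      rw [← hc, smul_eq_mul, smul_eq_mul, map_add, map_mul, map_mul]
      ring
    · rintro z w ⟨u₁, v₁, e₁, m₁, m₂, m₃, m₄⟩ ⟨u₂, v₂, e₂, n₁, n₂, n₃, n₄⟩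
      refine ⟨u₁ + u₂, v₁ + v₂, by rw [e₁, e₂]; ring, ?_, ?_, ?_, ?_⟩ <;>
        rw [mul_add] <;> exact add_mem (by assumption) (by assumption)
  obtain ⟨u, v, e, m₁, m₂, m₃, m₄⟩ := key 1 h1
  obtain ⟨s, hs⟩ := Submodule.mem_one.mp m₁
  obtain ⟨s₂, hs₂⟩ := Submodule.mem_one.mp m₂
  obtain ⟨t₂, ht₂⟩ := Submodule.mem_one.mp m₃
  obtain ⟨t, ht⟩ := Submodule.mem_one.mp m₄
  have hst : s + t = 1 := by
    apply IsFractionRing.injective R K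
    rw [map_add, hs, ht, ← e, map_one]
  have hcase : s ∉ P ∨ t ∉ P := by
    by_contra h
    push_neg at h
    exact hP.ne_top (Ideal.eq_top_of_isUnit_mem _ (hst ▸ Ideal.add_mem _ h.1 h.2) isUnit_one)
  have htnot : t ∈ P ∨ x ∈ locSub K P hP := by
    by_cases htP : t ∈ P
    · exact Or.inl htP
    · refine Or.inr ((mem_locSub_iff K P hP x).mpr ⟨s₂, t, htP, ?_⟩)
      rw [ht, ← mul_assoc, hxb, hs₂]
  rcases hcase with hsP | htP
  · -- s ∉ P; show x⁻¹ ∈ P_K * R_P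
    have hu0 : u ≠ 0 := by
      intro h0
      apply hsP
      have : s = 0 := by
        apply IsFractionRing.injective R K
        rw [hs, h0, mul_zero, map_zero]
      rw [this]; exact P.zero_mem
    have hxinv : x⁻¹ * algebraMap R K s = algebraMap R K t₂ := by
      rw [hs, ht₂, ← hab, inv_div]
      field_simp
    have ht₂P : t₂ ∈ P := by
      by_contra ht₂P
      apply hx
      refine (mem_locSub_iff K P hP x).mpr ⟨s, t₂, ht₂P, ?_⟩
      rw [ht₂, ← mul_assoc, hxb, hs]
    exact mem_mul_locSub_of (K := K) ht₂P hsP hxinv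
  · rcases htnot with h | h
    · exact absurd h htP
    · exact absurd h hx

end Aux


/-- Let `R` be a Prüfer domain and `⋆` a stable (semi)star operation. If
`P ∈ QSpec^⋆(R) ∪ PsSpec^⋆(R)`, then `R_P` is `⋆`-closed. -/
theorem locSub_star_closed {R K : Type*} [CommRing R] [IsDomain R] [Field K] [Algebra R K]
    [IsFractionRing R K]
    (hR : IsPruferDomain (R := R) K)
    (f : Submodule R K → Submodule R K) (hf : IsSemistarOperation K f)
    (hstable : IsStableOperation K f) (hsemi : f 1 = 1)
    (P : Ideal R) (hP : P.IsPrime) (hmem : P ∈ QSpec K f ∪ PsSpec K f) :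
    f (locSub K P hP) = locSub K P hP := by
  classical
  have hL : ∃ L : Ideal R, L.IsPrimary ∧ L.radical = P ∧
      f (idealToK K L) ⊓ 1 = idealToK K L := by
    rcases hmem with h | h
    · exact ⟨P, hP.isPrimary, hP.radical, h.2⟩
    · obtain ⟨_, _, L, h1, h2, h3⟩ := h
      exact ⟨L, h1, h2, h3⟩
  obtain ⟨L, hLprim, hLrad, hLstar⟩ := hL
  refine le_antisymm ?_ (hf.1 _)
  intro x hx
  by_contra hxmem
  have hx0 : x ≠ 0 := fun h => hxmem (h ▸ zero_mem _)
  have hy : x⁻¹ ∈ idealToK K P * locSub K P hP := inv_mem_of_not_mem K hR P hP hxmem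
  set φ := algebraMap R K with hφ
  have hL1 : idealToK K L ≤ (1 : Submodule R K) := by
    intro z hz
    obtain ⟨r, _, rfl⟩ := (mem_idealToK' (K := K)).mp hz
    exact Submodule.mem_one.mpr ⟨r, rfl⟩
  have hA1 : idealToK K L * locSub K P hP ⊓ 1 = idealToK K L := by
    refine le_antisymm ?_ (le_inf ?_ hL1)
    · rintro z ⟨hzA, hz1⟩
      obtain ⟨r, hr⟩ := Submodule.mem_one.mp hz1
      obtain ⟨l, s, hl, hs, hzs⟩ := mem_mul_locSub (K := K) hzA
      have hrs : r * s ∈ L := by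
        have he : r * s = l := by
          apply IsFractionRing.injective R K
          rw [map_mul, hr, hzs]
        rw [he]; exact hl
      rcases (Ideal.isPrimary_iff.mp hLprim).2 hrs with h | h
      · exact (mem_idealToK' (K := K)).mpr ⟨r, h, hr⟩
      · exact absurd (hLrad ▸ h) hs
    · calc idealToK K L = idealToK K L * 1 := (mul_one _).symm
        _ ≤ idealToK K L * locSub K P hP :=
          mul_le_mul' le_rfl (one_le_locSub K P hP)
  have hfA1 : f (idealToK K L * locSub K P hP) ⊓ 1 = idealToK K L := by
    have h2 : f (idealToK K L) = f (idealToK K L * locSub K P hP) ⊓ 1 := by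
      have h2' : f ((idealToK K L * locSub K P hP) ⊓ 1) = f (idealToK K L * locSub K P hP) ⊓ 1 := by
        rw [hstable, hsemi]
      rw [hA1] at h2'
      exact h2'
    calc f (idealToK K L * locSub K P hP) ⊓ 1
        = (f (idealToK K L * locSub K P hP) ⊓ 1) ⊓ 1 := by rw [inf_assoc, inf_idem]
      _ = f (idealToK K L) ⊓ 1 := by rw [← h2]
      _ = idealToK K L := hLstar
  obtain ⟨p, s, hpP, hsP, hys⟩ := mem_mul_locSub (K := K) hy
  have hy_loc : x⁻¹ ∈ locSub K P hP := (mem_locSub_iff K P hP _).mpr ⟨p, s, hsP, hys⟩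
  have hpL : p ∈ L.radical := hLrad ▸ hpP
  obtain ⟨m, hm⟩ := hpL
  have hex : ∃ n : ℕ, (x⁻¹) ^ (n + 1) ∈ idealToK K L * locSub K P hP := by
    refine ⟨m, mem_mul_locSub_of (K := K) (a := p ^ (m + 1)) (s := s ^ (m + 1))
      (by rw [pow_succ]; exact L.mul_mem_right p hm)
      (fun h => hsP (hP.mem_of_pow_mem _ h)) ?_⟩
    rw [map_pow, map_pow, ← mul_pow, hys]
  obtain ⟨n, hc, hmin⟩ : ∃ n : ℕ, (x⁻¹) ^ (n + 1) ∈ idealToK K L * locSub K P hP ∧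
      ∀ k < n, (x⁻¹) ^ (k + 1) ∉ idealToK K L * locSub K P hP :=
    ⟨Nat.find hex, Nat.find_spec hex, fun k hk => Nat.find_min hex hk⟩
  have hsmul : ((x⁻¹) ^ (n + 1)) • locSub K P hP ≤ idealToK K L * locSub K P hP := by
    intro z hz
    rw [← SetLike.mem_coe, Submodule.coe_pointwise_smul] at hz
    obtain ⟨w, hw, rfl⟩ := hz
    show x⁻¹ ^ (n + 1) * w ∈ idealToK K L * locSub K P hP
    have hmm : (x⁻¹) ^ (n + 1) * w ∈ (idealToK K L * locSub K P hP) * locSub K P hP :=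
      Submodule.mul_mem_mul hc hw
    rwa [mul_assoc, locSub_mul_self] at hmm
  have hyx : (x⁻¹) ^ (n + 1) * x = (x⁻¹) ^ n := by
    rw [pow_succ, mul_assoc, inv_mul_cancel₀ hx0, mul_one]
  have hynfA : (x⁻¹) ^ n ∈ f (idealToK K L * locSub K P hP) := by
    have h1 : ((x⁻¹) ^ (n + 1)) • x ∈ ((x⁻¹) ^ (n + 1)) • f (locSub K P hP) :=
      Submodule.smul_mem_pointwise_smul x _ _ hx
    rw [← hf.2.2.2] at h1
    have h2 := hf.2.2.1 _ _ hsmul h1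
    rwa [smul_eq_mul, hyx] at h2
  have hyn_loc : (x⁻¹) ^ n ∈ locSub K P hP := by
    rw [locSub, Subalgebra.mem_toSubmodule] at hy_loc ⊢
    exact pow_mem hy_loc n
  obtain ⟨r, t, htP, hrt⟩ := (mem_locSub_iff K P hP _).mp hyn_loc
  have hφr : φ r ∈ f (idealToK K L * locSub K P hP) := by
    have h3 : t • ((x⁻¹) ^ n) ∈ f (idealToK K L * locSub K P hP) :=
      Submodule.smul_mem _ t hynfA
    rwa [Algebra.smul_def, mul_comm ((algebraMap R K) t) (x⁻¹ ^ n), hrt] at h3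
  have hrL : r ∈ L := by
    have h4 : φ r ∈ idealToK K L :=
      hfA1 ▸ (Submodule.mem_inf.mpr ⟨hφr, Submodule.mem_one.mpr ⟨r, rfl⟩⟩)
    obtain ⟨l, hl, he⟩ := (mem_idealToK' (K := K)).mp h4
    rwa [← IsFractionRing.injective R K he]
  have hynA : (x⁻¹) ^ n ∈ idealToK K L * locSub K P hP :=
    mem_mul_locSub_of (K := K) hrL htP hrt
  cases n with
  | zero =>
    rw [pow_zero] at hynA
    have h5 : (1 : K) ∈ idealToK K L :=
      hA1 ▸ (Submodule.mem_inf.mpr ⟨hynA, Submodule.mem_one.mpr ⟨1, map_one _⟩⟩)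
    obtain ⟨l, hl, he⟩ := (mem_idealToK' (K := K)).mp h5
    have : l = 1 := IsFractionRing.injective R K (by rw [he, map_one])
    exact (Ideal.isPrimary_iff.mp hLprim).1 (Ideal.eq_top_iff_one L |>.mpr (this ▸ hl))
  | succ k =>
    exact hmin k (Nat.lt_succ_self k) hynA
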